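/- arXiv:2604.20077 — 5 statements merged into one kernel-verified Lean document; each statement's English description precedes it below -/
import Mathlib

section
/- Let K_t = Φ^T Φ and K_{t+1} be its bordering by k̄ = Φ^T φ and k = φ^T φ. For any index i ∈ {1,…,t} and γ > 0, the ridge leverage scores satisfy τ_{i,t+1}(γ) ≤ τ_{i,t}(γ), i.e., ridge leverage scores are monotonically non-increasing as new columns are added. More precisely, τ_{i,t+1}/τ_{i,t} = 1 - γ (k̄^T (K_t + γI)^{-1} e_i)^2 / (ξ · τ_{i,t}), where ξ = k + γ - k̄^T (K_t + γI)^{-1} k̄ ≥ γ. -/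
/-!
Write `A = K_t + γI` and `v = A⁻¹ k̄`. Since `K (K + γI)⁻¹ = I - γ (K + γI)⁻¹`, the ridge leverage
score is `τ_i = 1 - γ ((K + γI)⁻¹)_{ii}`, so it suffices to compare the top-left block of
`(K_{t+1} + γI)⁻¹` with `A⁻¹`. By the Schur complement formula that block is `A⁻¹ + ξ⁻¹ v vᵀ`,
where `ξ = k + γ - k̄ᵀ v` is the Schur complement of `A`; this gives the identity. Finally
`ξ ≥ γ` because `k - k̄ᵀ v = ‖φ - Φ v‖² + γ ‖v‖²` is the optimal value of the ridge regression
of `φ` on `Φ`.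
-/

open Matrix

namespace Matrix

variable {m n 𝕜 : Type*}

theorem mul_inv_add_smul_one [Fintype n] [DecidableEq n] {R : Type*} [CommRing R]
    (M : Matrix n n R) (γ : R) (h : IsUnit (M + γ • 1).det) :
    M * (M + γ • 1)⁻¹ = 1 - γ • (M + γ • 1)⁻¹ := by
  have h1 := mul_nonsing_inv _ h
  rw [Matrix.add_mul, Matrix.smul_mul, Matrix.one_mul] at h1
  rw [eq_sub_iff_add_eq, h1]

theorem fromBlocks_add_smul_one [DecidableEq m] [DecidableEq n] {R : Type*} [Semiring R]
    (A : Matrix m m R) (B : Matrix m n R) (C : Matrix n m R) (D : Matrix n n R) (γ : R) :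
    fromBlocks A B C D + γ • 1 = fromBlocks (A + γ • 1) B C (D + γ • 1) := by
  rw [← fromBlocks_one, fromBlocks_smul, fromBlocks_add]
  simp only [smul_zero, add_zero]

theorem isUnit_det_transpose_mul_self_add_smul_one [Fintype m] [Fintype n] [DecidableEq n]
    (Φ : Matrix m n ℝ) {γ : ℝ} (hγ : 0 < γ) : IsUnit (Φᵀ * Φ + γ • 1).det := by
  have hΦ : (Φᵀ * Φ).PosSemidef := by
    simpa only [conjTranspose_eq_transpose_of_trivial] using posSemidef_conjTranspose_mul_self Φ
  exact (isUnit_iff_isUnit_det _).1 (PosDef.posSemidef_add hΦ (PosDef.one.smul hγ)).isUnit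

theorem vecMul_inv_transpose_mul_self_add_smul_one [Fintype m] [Fintype n] [DecidableEq n]
    {R : Type*} [CommRing R] (Φ : Matrix m n R) (γ : R) (x : n → R) :
    x ᵥ* (Φᵀ * Φ + γ • 1)⁻¹ = (Φᵀ * Φ + γ • 1)⁻¹ *ᵥ x := by
  have hT : (Φᵀ * Φ + γ • 1)ᵀ = Φᵀ * Φ + γ • 1 := by
    rw [transpose_add, transpose_mul, transpose_transpose, transpose_smul, transpose_one]
  rw [← vecMul_transpose, transpose_nonsing_inv, hT]

theorem transpose_mul_self_fromCols_replicateCol [Fintype m] {R : Type*} [CommRing R]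
    (Φ : Matrix m n R) (φ : m → R) :
    (fromCols Φ (replicateCol Unit φ))ᵀ * fromCols Φ (replicateCol Unit φ) =
      fromBlocks (Φᵀ * Φ) (replicateCol Unit (Φᵀ *ᵥ φ)) (replicateRow Unit (Φᵀ *ᵥ φ))
        (of fun _ _ => φ ⬝ᵥ φ) := by
  rw [transpose_fromCols, fromRows_mul_fromCols, transpose_replicateCol, replicateCol_mulVec,
    replicateRow_mul_replicateCol, mulVec_transpose, replicateRow_vecMul]

theorem dotProduct_sub_dotProduct_eq_of_mulVec_eq [Fintype m] [Fintype n] [DecidableEq n]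
    {R : Type*} [CommRing R] (Φ : Matrix m n R) (φ : m → R) (v : n → R) (γ : R)
    (hv : (Φᵀ * Φ + γ • 1) *ᵥ v = Φᵀ *ᵥ φ) :
    φ ⬝ᵥ φ - (Φᵀ *ᵥ φ) ⬝ᵥ v = (φ - Φ *ᵥ v) ⬝ᵥ (φ - Φ *ᵥ v) + γ * (v ⬝ᵥ v) := by
  have hK : (Φᵀ * Φ) *ᵥ v = Φᵀ *ᵥ φ - γ • v := by
    rw [eq_sub_iff_add_eq, ← hv, add_mulVec, smul_mulVec, one_mulVec]
  have hφ : φ ⬝ᵥ (Φ *ᵥ v) = (Φᵀ *ᵥ φ) ⬝ᵥ v := by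
    rw [dotProduct_mulVec, mulVec_transpose]
  have hΦv : (Φ *ᵥ v) ⬝ᵥ (Φ *ᵥ v) = (Φᵀ *ᵥ φ) ⬝ᵥ v - γ * (v ⬝ᵥ v) := by
    rw [dotProduct_mulVec, ← mulVec_transpose, mulVec_mulVec, hK, sub_dotProduct,
      smul_dotProduct, smul_eq_mul]
  simp only [dotProduct_sub, sub_dotProduct, hφ, hΦv, dotProduct_comm (Φ *ᵥ v) φ]
  ring

theorem dotProduct_inv_mulVec_le_dotProduct_self [Fintype m] [Fintype n] [DecidableEq n]
    (Φ : Matrix m n ℝ) (φ : m → ℝ) {γ : ℝ} (hγ : 0 < γ) :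
    (Φᵀ *ᵥ φ) ⬝ᵥ ((Φᵀ * Φ + γ • 1)⁻¹ *ᵥ (Φᵀ *ᵥ φ)) ≤ φ ⬝ᵥ φ := by
  set v := (Φᵀ * Φ + γ • 1)⁻¹ *ᵥ (Φᵀ *ᵥ φ)
  have hres := dotProduct_sub_dotProduct_eq_of_mulVec_eq Φ φ v γ (by
    rw [mulVec_mulVec, mul_nonsing_inv _ (isUnit_det_transpose_mul_self_add_smul_one Φ hγ),
      one_mulVec])
  have hr : 0 ≤ (φ - Φ *ᵥ v) ⬝ᵥ (φ - Φ *ᵥ v) := dotProduct_self_star_nonneg _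
  have hv : 0 ≤ v ⬝ᵥ v := dotProduct_self_star_nonneg _
  linarith [mul_nonneg hγ.le hv]

theorem inv_fromBlocks_replicateCol_replicateRow_apply_inl_inl [Fintype n] [DecidableEq n]
    [Field 𝕜] (A : Matrix n n 𝕜) (hA : IsUnit A.det) (u w : n → 𝕜) (c : 𝕜)
    (hs : c - w ⬝ᵥ (A⁻¹ *ᵥ u) ≠ 0) (i j : n) :
    (fromBlocks A (replicateCol Unit u) (replicateRow Unit w) (of fun _ _ => c))⁻¹
        (.inl i) (.inl j) =
      A⁻¹ i j + (A⁻¹ *ᵥ u) i * (w ᵥ* A⁻¹) j / (c - w ⬝ᵥ (A⁻¹ *ᵥ u)) := by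
  let := A.invertibleOfIsUnitDet hA
  have hS : (of fun _ _ => c) - replicateRow Unit w * A⁻¹ * replicateCol Unit u =
      (of fun _ _ => c - w ⬝ᵥ (A⁻¹ *ᵥ u) : Matrix Unit Unit 𝕜) := by
    rw [Matrix.mul_assoc, ← replicateCol_mulVec, replicateRow_mul_replicateCol]
    rfl
  let : Invertible ((of fun _ _ => c) - replicateRow Unit w * ⅟A * replicateCol Unit u) :=
    invertibleOfIsUnitDet _ (by rw [invOf_eq_nonsing_inv, hS, det_unique]; exact hs.isUnit)
  let := fromBlocks₁₁Invertible A (replicateCol Unit u) (replicateRow Unit w) (of fun _ _ => c)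
  rw [← invOf_eq_nonsing_inv, invOf_fromBlocks₁₁_eq, fromBlocks_apply₁₁]
  simp only [invOf_eq_nonsing_inv]
  rw [hS, inv_subsingleton (of fun _ _ => _ : Matrix Unit Unit 𝕜), Matrix.mul_assoc _ _ A⁻¹,
    ← replicateRow_vecMul, ← replicateCol_mulVec]
  simp only [of_apply, Ring.inverse_eq_inv', add_apply, mul_apply, Finset.univ_unique,
    PUnit.default_eq_unit, replicateCol_apply, diagonal_apply_eq, Finset.sum_const,
    Finset.card_singleton, one_smul, replicateRow_apply, div_eq_mul_inv, add_right_inj]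
  ring

theorem mul_inv_add_smul_one_fromBlocks_apply_inl_inl [Fintype n] [DecidableEq n] [Field 𝕜]
    (M : Matrix n n 𝕜) (u w : n → 𝕜) (c γ : 𝕜) (hM : IsUnit (M + γ • 1).det)
    (hM' : IsUnit
      (fromBlocks M (replicateCol Unit u) (replicateRow Unit w) (of fun _ _ => c) + γ • 1).det)
    (hs : c + γ - w ⬝ᵥ ((M + γ • 1)⁻¹ *ᵥ u) ≠ 0) (i : n) :
    (fromBlocks M (replicateCol Unit u) (replicateRow Unit w) (of fun _ _ => c) *
        (fromBlocks M (replicateCol Unit u) (replicateRow Unit w) (of fun _ _ => c) + γ • 1)⁻¹)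
        (.inl i) (.inl i) =
      (M * (M + γ • 1)⁻¹) i i - γ * (((M + γ • 1)⁻¹ *ᵥ u) i * (w ᵥ* (M + γ • 1)⁻¹) i) /
        (c + γ - w ⬝ᵥ ((M + γ • 1)⁻¹ *ᵥ u)) := by
  have hc : (of fun _ _ => c : Matrix Unit Unit 𝕜) + γ • 1 = of fun _ _ => c + γ := by
    ext; simp
  rw [mul_inv_add_smul_one _ _ hM', mul_inv_add_smul_one _ _ hM, fromBlocks_add_smul_one, hc]
  simp only [sub_apply, smul_apply, one_apply_eq, smul_eq_mul]
  rw [inv_fromBlocks_replicateCol_replicateRow_apply_inl_inl _ hM _ _ _ hs]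
  ring

end Matrix

/-- Ridge leverage scores are monotonically non-increasing under bordering, with the precise
identity τ_{i,t+1} = τ_{i,t} - γ (k̄ᵀ(K_t+γI)⁻¹e_i)² / ξ, where ξ ≥ γ. -/
theorem rls_monotone_decrease {D t : ℕ} (Φ : Matrix (Fin D) (Fin t) ℝ)
    (φ : Fin D → ℝ) (γ : ℝ) (hγ : 0 < γ) (i : Fin t) :
    let K : Matrix (Fin t) (Fin t) ℝ := Φᵀ * Φ
    let kb : Fin t → ℝ := Φᵀ *ᵥ φ
    let k : ℝ := φ ⬝ᵥ φ
    let K' : Matrix (Fin t ⊕ Unit) (Fin t ⊕ Unit) ℝ :=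
      Matrix.fromBlocks K (Matrix.of fun i _ => kb i) (Matrix.of fun _ j => kb j)
        (Matrix.of fun _ _ => k)
    let ξ : ℝ := k + γ - kb ⬝ᵥ ((K + γ • 1)⁻¹ *ᵥ kb)
    let τt : ℝ := (K * (K + γ • 1)⁻¹) i i
    let τt1 : ℝ := (K' * (K' + γ • 1)⁻¹) (Sum.inl i) (Sum.inl i)
    γ ≤ ξ ∧
    τt1 = τt - γ * (kb ⬝ᵥ ((K + γ • 1)⁻¹ *ᵥ Pi.single i 1)) ^ 2 / ξ ∧
    τt1 ≤ τt := by
  intro K kb k K' ξ τt τt1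
  have hdet : IsUnit (K + γ • 1).det := isUnit_det_transpose_mul_self_add_smul_one Φ hγ
  have hdet' : IsUnit (K' + γ • 1).det := by
    rw [show K' = _ from (transpose_mul_self_fromCols_replicateCol Φ φ).symm]
    exact isUnit_det_transpose_mul_self_add_smul_one _ hγ
  have hγξ : γ ≤ ξ := by
    have := dotProduct_inv_mulVec_le_dotProduct_self Φ φ hγ
    simp only [ξ, k, kb, K]
    linarith
  have hsymm := vecMul_inv_transpose_mul_self_add_smul_one Φ γ kb
  have hτ : τt1 = τt - γ * ((K + γ • 1)⁻¹ *ᵥ kb) i ^ 2 / ξ := by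
    have := mul_inv_add_smul_one_fromBlocks_apply_inl_inl K kb kb k γ hdet hdet'
      (hγ.trans_le hγξ).ne' i
    rwa [hsymm, ← sq] at this
  have he : kb ⬝ᵥ ((K + γ • 1)⁻¹ *ᵥ Pi.single i 1) = ((K + γ • 1)⁻¹ *ᵥ kb) i := by
    rw [dotProduct_mulVec, dotProduct_single, mul_one, hsymm]
  refine ⟨hγξ, he ▸ hτ, hτ ▸ sub_le_self _ ?_⟩
  exact div_nonneg (mul_nonneg hγ.le (sq_nonneg _)) (hγ.le.trans hγξ)
end

section
/- Sandwiching of regularized inverses: if K and K̃ are symmetric PSD n×n matrices with 0 ⪯ K - K̃ ⪯ (γ/(1-ε)) I for some γ > 0 and 0 ≤ ε < 1, and η = (2-ε)/(1-ε), then the chain (K + γI)^{-1} ⪰ (K̃ + ηγI)^{-1} ⪰ (K + ηγI)^{-1} ⪰ (1/η)(K + γI)^{-1} holds in the Loewner order. -/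
open Matrix
open scoped MatrixOrder

private lemma psd_smul {n : ℕ} {A : Matrix (Fin n) (Fin n) ℝ} (hA : A.PosSemidef)
    {c : ℝ} (hc : 0 ≤ c) : (c • A).PosSemidef := by
  constructor
  · show (c • A)ᴴ = c • A
    rw [conjTranspose_smul, hA.1.eq, star_trivial]
  · exact (hA.smul hc).2

private lemma pd_smul_one {n : ℕ} {c : ℝ} (hc : 0 < c) :
    (c • (1 : Matrix (Fin n) (Fin n) ℝ)).PosDef := by
  rw [smul_one_eq_diagonal]
  exact posDef_diagonal_iff.mpr fun _ => hc

/-- Antitonicity of the matrix inverse in the Loewner order. -/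
private lemma inv_antitone {n : ℕ} {A B : Matrix (Fin n) (Fin n) ℝ}
    (hA : A.PosDef) (hB : B.PosDef) (h : (B - A).PosSemidef) :
    (A⁻¹ - B⁻¹).PosSemidef := by
  set S := CFC.sqrt A with hSdef
  have hS : S.PosSemidef := nonneg_iff_posSemidef.mp (CFC.sqrt_nonneg A)
  have hSS : S * S = A := CFC.sqrt_mul_sqrt_self A hA.posSemidef.nonneg
  have hAdet : IsUnit A.det := isUnit_iff_ne_zero.mpr hA.det_pos.ne'
  have hBdet : IsUnit B.det := isUnit_iff_ne_zero.mpr hB.det_pos.ne'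
  have hSdet : IsUnit S.det := by
    have hd : S.det * S.det = A.det := by rw [← det_mul, hSS]
    exact isUnit_iff_ne_zero.mpr fun h0 => by
      apply hA.det_pos.ne'; rw [← hd, h0, mul_zero]
  set N := S * B⁻¹ * S with hNdef
  have hN : N.PosSemidef := by
    have := hB.inv.posSemidef.mul_mul_conjTranspose_same S
    rwa [hS.1.eq] at this
  set U := CFC.sqrt N with hUdef
  have hU : U.PosSemidef := nonneg_iff_posSemidef.mp (CFC.sqrt_nonneg N)
  have hUU : U * U = N := CFC.sqrt_mul_sqrt_self N hN.nonneg
  have hNdet : IsUnit N.det := by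
    have hBi : IsUnit B⁻¹.det := isUnit_iff_ne_zero.mpr hB.inv.det_pos.ne'
    rw [hNdef, det_mul, det_mul]
    exact (hSdet.mul hBi).mul hSdet
  have hUdet : IsUnit U.det := by
    have hd : U.det * U.det = N.det := by rw [← det_mul, hUU]
    exact isUnit_iff_ne_zero.mpr fun h0 => by
      apply hNdet.ne_zero; rw [← hd, h0, mul_zero]
  -- cancellation lemmas
  have c1 : ∀ X : Matrix (Fin n) (Fin n) ℝ, S * (S⁻¹ * X) = X :=
    fun X => Matrix.mul_nonsing_inv_cancel_left S X hSdet
  have c2 : ∀ X : Matrix (Fin n) (Fin n) ℝ, S⁻¹ * (S * X) = X :=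
    fun X => Matrix.nonsing_inv_mul_cancel_left S X hSdet
  have c3 : ∀ X : Matrix (Fin n) (Fin n) ℝ, U * (U⁻¹ * X) = X :=
    fun X => Matrix.mul_nonsing_inv_cancel_left U X hUdet
  have c4 : ∀ X : Matrix (Fin n) (Fin n) ℝ, U⁻¹ * (U * X) = X :=
    fun X => Matrix.nonsing_inv_mul_cancel_left U X hUdet
  have hNinv : N⁻¹ = S⁻¹ * (B * S⁻¹) := by
    rw [hNdef, Matrix.mul_inv_rev, Matrix.mul_inv_rev,
      Matrix.nonsing_inv_nonsing_inv B hBdet]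
  have hBeq : B = S * (U⁻¹ * (U⁻¹ * S)) := by
    have e : U⁻¹ * (U⁻¹ * S) = N⁻¹ * S := by
      rw [← Matrix.mul_assoc, ← Matrix.mul_inv_rev, hUU]
    rw [e, hNinv]
    simp only [Matrix.mul_assoc, Matrix.nonsing_inv_mul S hSdet, Matrix.mul_one, c1, c2]
  have hAinv : A⁻¹ = S⁻¹ * S⁻¹ := by rw [← hSS, Matrix.mul_inv_rev]
  have hBinv : B⁻¹ = S⁻¹ * (U * (U * S⁻¹)) := by
    rw [hBeq, Matrix.mul_inv_rev, Matrix.mul_inv_rev, Matrix.mul_inv_rev,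
      Matrix.nonsing_inv_nonsing_inv U hUdet]
    simp only [Matrix.mul_assoc]
  set C := S⁻¹ * (U * S⁻¹) with hCdef
  have hCH : Cᴴ = C := by
    rw [hCdef, conjTranspose_mul, conjTranspose_mul, hS.1.inv.eq, hU.1.eq,
      Matrix.mul_assoc]
  have key : A⁻¹ - B⁻¹ = C * (B - A) * Cᴴ := by
    rw [hCH, hAinv, hBinv, hCdef]
    rw [Matrix.mul_sub, Matrix.sub_mul]
    rw [hBeq, ← hSS]
    simp only [Matrix.mul_assoc, c1, c2, c3, c4]
  rw [key]
  exact h.mul_mul_conjTranspose_same C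

/-- Sandwiching of regularized inverses in the Loewner order:
(K+γI)⁻¹ ⪰ (K̃+ηγI)⁻¹ ⪰ (K+ηγI)⁻¹ ⪰ (1/η)(K+γI)⁻¹. -/
theorem regularized_inverse_sandwich {n : ℕ} (K Kt : Matrix (Fin n) (Fin n) ℝ)
    (hK : K.PosSemidef) (hKt : Kt.PosSemidef)
    (γ ε : ℝ) (hγ : 0 < γ) (hε0 : 0 ≤ ε) (hε1 : ε < 1)
    (h1 : (K - Kt).PosSemidef)
    (h2 : ((γ / (1 - ε)) • (1 : Matrix (Fin n) (Fin n) ℝ) - (K - Kt)).PosSemidef) :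
    let η : ℝ := (2 - ε) / (1 - ε)
    ((K + γ • 1)⁻¹ - (Kt + (η * γ) • 1)⁻¹).PosSemidef ∧
    ((Kt + (η * γ) • 1)⁻¹ - (K + (η * γ) • 1)⁻¹).PosSemidef ∧
    ((K + (η * γ) • 1)⁻¹ - (1 / η) • (K + γ • 1)⁻¹).PosSemidef := by
  intro η
  have hε : (0:ℝ) < 1 - ε := by linarith
  have hη1 : (1:ℝ) < η := by
    rw [show η = (2 - ε) / (1 - ε) from rfl, lt_div_iff₀ hε]; linarith
  have hη0 : (0:ℝ) < η := by linarith
  have hηsub : η - 1 = 1 / (1 - ε) := by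
    rw [show η = (2 - ε) / (1 - ε) from rfl]
    field_simp
    ring
  have hηγ : η * γ - γ = γ / (1 - ε) := by
    rw [← sub_one_mul, hηsub]; ring
  have hA1 : (K + γ • 1).PosDef := Matrix.PosDef.posSemidef_add hK (pd_smul_one hγ)
  have hA2 : (Kt + (η * γ) • 1).PosDef :=
    Matrix.PosDef.posSemidef_add hKt (pd_smul_one (mul_pos hη0 hγ))
  have hA3 : (K + (η * γ) • 1).PosDef :=
    Matrix.PosDef.posSemidef_add hK (pd_smul_one (mul_pos hη0 hγ))
  refine ⟨?_, ?_, ?_⟩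
  · refine inv_antitone hA1 hA2 ?_
    have e : Kt + (η * γ) • 1 - (K + γ • 1)
        = (γ / (1 - ε)) • (1 : Matrix (Fin n) (Fin n) ℝ) - (K - Kt) := by
      rw [← hηγ, sub_smul]
      abel
    rw [e]; exact h2
  · refine inv_antitone hA2 hA3 ?_
    have e : K + (η * γ) • 1 - (Kt + (η * γ) • 1) = K - Kt := by abel
    rw [e]; exact h1
  · have hsK : ((η - 1) • K).PosSemidef := psd_smul hK (by linarith)
    have hkey : η • (K + γ • 1) = (K + (η * γ) • 1) + (η - 1) • K := by
      rw [smul_add, smul_smul, sub_smul, one_smul]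
      abel
    have hPD : (η • (K + γ • 1)).PosDef := by
      rw [hkey]; exact hA3.add_posSemidef hsK
    have hdiff : ((η • (K + γ • 1)) - (K + (η * γ) • 1)).PosSemidef := by
      have e : η • (K + γ • 1) - (K + (η * γ) • 1) = (η - 1) • K := by
        rw [hkey]; abel
      rw [e]; exact hsK
    have h3 := inv_antitone hA3 hPD hdiff
    have hinv : (η • (K + γ • 1))⁻¹ = (1 / η) • (K + γ • 1)⁻¹ := by
      have : Invertible η := invertibleOfNonzero hη0.ne'
      rw [Matrix.inv_smul (A := K + γ • 1) η
          (isUnit_iff_ne_zero.mpr hA1.det_pos.ne'),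
        invOf_eq_inv η, one_div]
    rwa [hinv] at h3
end

section
/- Approximate leverage score estimator accuracy: let K be symmetric PSD, γ > 0, 0 ≤ ε < 1, η = (2-ε)/(1-ε), and let K̃ be symmetric PSD with 0 ⪯ K - K̃ ⪯ (γ/(1-ε)) I. Define τ̃_i = (1/(ηγ))(K_{ii} - k_i^T (K̃ + ηγI)^{-1} k_i) where k_i = K e_i. Then (1/η) τ_i(γ) ≤ τ̃_i ≤ τ_i(γ), where τ_i(γ) = e_i^T K (K+γI)^{-1} e_i. -/
/-!
Both bounds come from the antitonicity of `A ↦ xᵀA⁻¹x` in the Loewner order, applied to the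
identity `λ τᵢ(λ) = Kᵢᵢ - kᵢᵀ(K + λI)⁻¹kᵢ`. Since `ηγ = γ + γ/(1-ε)`, the hypotheses say
`K + γI ⪯ K̃ + ηγI ⪯ K + ηγI`, so `ηγ τ̃ᵢ` lies between `γ τᵢ(γ)` and `ηγ τᵢ(ηγ)`. Finally
`τᵢ(ηγ) ≤ τᵢ(γ)`, because `τᵢ(λ) = 1 - ((λ⁻¹K + I)⁻¹)ᵢᵢ` and `λ⁻¹K + I` decreases with `λ`.
-/

open Matrix

namespace Matrix

open scoped MatrixOrder

variable {ι : Type*} [Fintype ι]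

theorem PosSemidef.dotProduct_mulVec_nonneg_real {A : Matrix ι ι ℝ} (hA : A.PosSemidef)
    (x : ι → ℝ) : 0 ≤ x ⬝ᵥ (A *ᵥ x) := by
  simpa using hA.dotProduct_mulVec_nonneg x

variable [DecidableEq ι]

theorem PosDef.dotProduct_inv_mulVec_le_of_le {A B : Matrix ι ι ℝ} (hA : A.PosDef) (hAB : A ≤ B)
    (x : ι → ℝ) : x ⬝ᵥ (B⁻¹ *ᵥ x) ≤ x ⬝ᵥ (A⁻¹ *ᵥ x) := by
  have hB : B.PosDef := by simpa using hA.add_posSemidef hAB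
  set u := A⁻¹ *ᵥ x
  set v := B⁻¹ *ᵥ x
  have hAu : A *ᵥ u = x := by
    rw [mulVec_mulVec, mul_nonsing_inv _ hA.det_pos.ne'.isUnit, one_mulVec]
  have hBv : B *ᵥ v = x := by
    rw [mulVec_mulVec, mul_nonsing_inv _ hB.det_pos.ne'.isUnit, one_mulVec]
  have hAv : u ⬝ᵥ (A *ᵥ v) = x ⬝ᵥ v := by
    rw [dotProduct_mulVec, ← mulVec_transpose, isHermitian_iff_isSymm.1 hA.isHermitian, hAu]
  -- the difference of the two sides is a sum of two nonnegative quadratic forms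
  have key : (u - v) ⬝ᵥ (A *ᵥ (u - v)) + v ⬝ᵥ ((B - A) *ᵥ v) = x ⬝ᵥ u - x ⬝ᵥ v := by
    simp only [mulVec_sub, sub_mulVec, sub_dotProduct, dotProduct_sub, hAu, hBv, hAv]
    rw [dotProduct_comm v x, dotProduct_comm u x]
    ring
  linarith [hA.posSemidef.dotProduct_mulVec_nonneg_real (u - v),
    hAB.dotProduct_mulVec_nonneg_real v]

theorem diag_mul_mul_eq_dotProduct_col {R : Type*} [CommSemiring R] {K : Matrix ι ι R}
    (hK : K.IsSymm) (M : Matrix ι ι R) (i : ι) :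
    (K * M * K) i i = K.col i ⬝ᵥ (M *ᵥ K.col i) :=
  calc (K * M * K) i i = ((K * M * K) *ᵥ Pi.single i 1) i := by rw [mulVec_single_one]; rfl
    _ = Kᵀ i ⬝ᵥ (M *ᵥ K.col i) := by
      rw [← mulVec_mulVec, ← mulVec_mulVec, mulVec_single_one, hK.eq]; rfl

section Regularization

variable {R : Type*} [CommRing R] (K : Matrix ι ι R) {l : R}

theorem mul_inv_add_smul_one_s11 (h : IsUnit (K + l • 1).det) :
    K * (K + l • 1)⁻¹ = 1 - l • (K + l • 1)⁻¹ := by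
  rw [eq_sub_iff_add_eq]
  calc K * (K + l • 1)⁻¹ + l • (K + l • 1)⁻¹ = (K + l • 1) * (K + l • 1)⁻¹ := by
        rw [add_mul, Matrix.smul_mul, one_mul]
    _ = 1 := mul_nonsing_inv _ h

theorem mul_inv_add_smul_one_mul (h : IsUnit (K + l • 1).det) :
    K * (K + l • 1)⁻¹ * K = K - l • (K * (K + l • 1)⁻¹) := by
  rw [eq_sub_iff_add_eq]
  calc K * (K + l • 1)⁻¹ * K + l • (K * (K + l • 1)⁻¹) = K * (K + l • 1)⁻¹ * (K + l • 1) := by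
        rw [mul_add, Matrix.mul_smul, mul_one]
    _ = K := nonsing_inv_mul_cancel_right _ _ h

end Regularization

theorem inv_inv_smul_add_one {𝕜 : Type*} [Field 𝕜] (A : Matrix ι ι 𝕜) {l : 𝕜} (hl : l ≠ 0)
    (h : IsUnit (A + l • 1).det) : (l⁻¹ • A + 1)⁻¹ = l • (A + l • 1)⁻¹ := by
  have hA : l⁻¹ • A + 1 = l⁻¹ • (A + l • 1) := by
    rw [smul_add, smul_smul, inv_mul_cancel₀ hl, one_smul]
  rw [hA]
  refine inv_eq_right_inv ?_
  rw [smul_mul_smul_comm, inv_mul_cancel₀ hl, one_smul, mul_nonsing_inv _ h]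

noncomputable def ridgeLeverageScore (K : Matrix ι ι ℝ) (l : ℝ) (i : ι) : ℝ :=
  (K * (K + l • 1)⁻¹) i i

theorem PosSemidef.isUnit_det_add_smul_one {K : Matrix ι ι ℝ} (hK : K.PosSemidef) {l : ℝ}
    (hl : 0 < l) : IsUnit (K + l • 1).det :=
  (PosDef.posSemidef_add hK (PosDef.one.smul hl)).det_pos.ne'.isUnit

theorem mul_ridgeLeverageScore {K : Matrix ι ι ℝ} (hK : K.IsSymm) {l : ℝ}
    (h : IsUnit (K + l • 1).det) (i : ι) :
    l * ridgeLeverageScore K l i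
      = K i i - (K *ᵥ Pi.single i 1) ⬝ᵥ ((K + l • 1)⁻¹ *ᵥ (K *ᵥ Pi.single i 1)) := by
  rw [mulVec_single_one, ← diag_mul_mul_eq_dotProduct_col hK, mul_inv_add_smul_one_mul K h,
    sub_apply, smul_apply, smul_eq_mul, ridgeLeverageScore, sub_sub_cancel]

theorem PosSemidef.mul_ridgeLeverageScore_le_of_le {K M : Matrix ι ι ℝ} (hK : K.PosSemidef)
    {l : ℝ} (hl : 0 < l) (hM : K + l • 1 ≤ M) (i : ι) :
    l * ridgeLeverageScore K l i
      ≤ K i i - (K *ᵥ Pi.single i 1) ⬝ᵥ (M⁻¹ *ᵥ (K *ᵥ Pi.single i 1)) := by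
  rw [mul_ridgeLeverageScore (isHermitian_iff_isSymm.1 hK.isHermitian)
    (hK.isUnit_det_add_smul_one hl)]
  exact sub_le_sub_left
    ((PosDef.posSemidef_add hK (PosDef.one.smul hl)).dotProduct_inv_mulVec_le_of_le hM _) _

theorem le_mul_ridgeLeverageScore_of_le {K M : Matrix ι ι ℝ} (hK : K.IsSymm) (hM : M.PosDef)
    {l : ℝ} (hMK : M ≤ K + l • 1) (i : ι) :
    K i i - (K *ᵥ Pi.single i 1) ⬝ᵥ (M⁻¹ *ᵥ (K *ᵥ Pi.single i 1))
      ≤ l * ridgeLeverageScore K l i := by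
  have hKl : (K + l • 1).PosDef := by simpa using hM.add_posSemidef hMK
  rw [mul_ridgeLeverageScore hK hKl.det_pos.ne'.isUnit]
  exact sub_le_sub_left (hM.dotProduct_inv_mulVec_le_of_le hMK _) _

theorem ridgeLeverageScore_eq_one_sub {K : Matrix ι ι ℝ} {l : ℝ} (hl : l ≠ 0)
    (h : IsUnit (K + l • 1).det) (i : ι) :
    ridgeLeverageScore K l i = 1 - (l⁻¹ • K + 1)⁻¹ i i := by
  rw [ridgeLeverageScore, mul_inv_add_smul_one_s11 K h, inv_inv_smul_add_one K hl h, sub_apply,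
    one_apply_eq]

theorem PosSemidef.ridgeLeverageScore_antitoneOn {K : Matrix ι ι ℝ} (hK : K.PosSemidef) (i : ι) :
    AntitoneOn (ridgeLeverageScore K · i) (Set.Ioi 0) := by
  intro a (ha : 0 < a) b (hb : 0 < b) hab
  have hle : b⁻¹ • K + 1 ≤ a⁻¹ • K + 1 := by
    rw [le_iff, add_sub_add_right_eq_sub, ← sub_smul]
    exact hK.smul (sub_nonneg.2 (inv_anti₀ ha hab))
  have hpos : (b⁻¹ • K + 1).PosDef :=
    PosDef.posSemidef_add (hK.smul (inv_nonneg.2 hb.le)) PosDef.one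
  have hdiag := hpos.dotProduct_inv_mulVec_le_of_le hle (Pi.single i 1)
  simp only [mulVec_single_one, single_one_dotProduct, col_apply] at hdiag
  show ridgeLeverageScore K b i ≤ ridgeLeverageScore K a i
  rw [ridgeLeverageScore_eq_one_sub hb.ne' (hK.isUnit_det_add_smul_one hb),
    ridgeLeverageScore_eq_one_sub ha.ne' (hK.isUnit_det_add_smul_one ha)]
  linarith

end Matrix

theorem approx_rls_accuracy_general {n : ℕ} (K Kt : Matrix (Fin n) (Fin n) ℝ)
    (hK : K.PosSemidef) (hKt : Kt.PosSemidef)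
    (γ ε : ℝ) (hγ : 0 < γ) (hε1 : ε < 1)
    (h1 : (K - Kt).PosSemidef)
    (h2 : ((γ / (1 - ε)) • (1 : Matrix (Fin n) (Fin n) ℝ) - (K - Kt)).PosSemidef)
    (i : Fin n) :
    let η : ℝ := (2 - ε) / (1 - ε)
    let ki : Fin n → ℝ := K *ᵥ Pi.single i 1
    let τ : ℝ := (K * (K + γ • 1)⁻¹) i i
    let τtilde : ℝ := (1 / (η * γ)) * (K i i - ki ⬝ᵥ ((Kt + (η * γ) • 1)⁻¹ *ᵥ ki))
    (1 / η) * τ ≤ τtilde ∧ τtilde ≤ τ := by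
  intro η ki τ τtilde
  have hε : 0 < 1 - ε := by linarith
  have hη : 1 ≤ η := by rw [le_div_iff₀ hε]; linarith
  have hηγ : η * γ = γ + γ / (1 - ε) := by simp only [η]; field_simp; ring
  have hηγ_pos : 0 < η * γ := by positivity
  have hlower : γ * τ ≤ K i i - ki ⬝ᵥ ((Kt + (η * γ) • 1)⁻¹ *ᵥ ki) := by
    refine hK.mul_ridgeLeverageScore_le_of_le hγ ?_ i
    show (Kt + (η * γ) • 1 - (K + γ • 1)).PosSemidef
    convert h2 using 1
    rw [hηγ, add_smul]; abel
  have hupper : K i i - ki ⬝ᵥ ((Kt + (η * γ) • 1)⁻¹ *ᵥ ki)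
      ≤ η * γ * ridgeLeverageScore K (η * γ) i := by
    refine le_mul_ridgeLeverageScore_of_le (isHermitian_iff_isSymm.1 hK.isHermitian)
      (PosDef.posSemidef_add hKt (PosDef.one.smul hηγ_pos)) ?_ i
    show (K + (η * γ) • 1 - (Kt + (η * γ) • 1)).PosSemidef
    rwa [add_sub_add_right_eq_sub]
  have hmono : ridgeLeverageScore K (η * γ) i ≤ τ :=
    hK.ridgeLeverageScore_antitoneOn i hγ hηγ_pos (le_mul_of_one_le_left hγ.le hη)
  constructor
  · calc (1 / η) * τ = (1 / (η * γ)) * (γ * τ) := by field_simp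
      _ ≤ (1 / (η * γ)) * (K i i - ki ⬝ᵥ ((Kt + (η * γ) • 1)⁻¹ *ᵥ ki)) := by gcongr
  · calc τtilde ≤ (1 / (η * γ)) * (η * γ * ridgeLeverageScore K (η * γ) i) := by
          show (1 / (η * γ)) * _ ≤ _
          gcongr
      _ = ridgeLeverageScore K (η * γ) i := by field_simp
      _ ≤ τ := hmono

/-- Accuracy of the approximate leverage score estimator:
(1/η) τ_i(γ) ≤ τ̃_i ≤ τ_i(γ). -/
theorem approx_rls_accuracy {n : ℕ} (K Kt : Matrix (Fin n) (Fin n) ℝ)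
    (hK : K.PosSemidef) (hKt : Kt.PosSemidef)
    (γ ε : ℝ) (hγ : 0 < γ) (hε0 : 0 ≤ ε) (hε1 : ε < 1)
    (h1 : (K - Kt).PosSemidef)
    (h2 : ((γ / (1 - ε)) • (1 : Matrix (Fin n) (Fin n) ℝ) - (K - Kt)).PosSemidef)
    (i : Fin n) :
    let η : ℝ := (2 - ε) / (1 - ε)
    let ki : Fin n → ℝ := K *ᵥ Pi.single i 1
    let τ : ℝ := (K * (K + γ • 1)⁻¹) i i
    let τtilde : ℝ := (1 / (η * γ)) * (K i i - ki ⬝ᵥ ((Kt + (η * γ) • 1)⁻¹ *ᵥ ki))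
    (1 / η) * τ ≤ τtilde ∧ τtilde ≤ τ :=
  approx_rls_accuracy_general K Kt hK hKt γ ε hγ hε1 h1 h2 i
end

section
/- Squared Loewner inequalities for regularized approximations: if K and K̃ are symmetric PSD with 0 ⪯ K - K̃ ⪯ (γ/(1-ε))I for γ > 0 and 0 ≤ ε < 1, then (K + γI)² ⪯ (2/(1-ε))² (K̃ + γI)² and (K̃ + γI)² ⪯ (2/(1-ε))² (K + γI)². Consequently ((1-ε)²/4)(K̃ + γI)^{-2} ⪯ (K + γI)^{-2} ⪯ (4/(1-ε)²)(K̃ + γI)^{-2}. -/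
/-!
Put `A = K + γ`, `B = K̃ + γ` and `δ = γ / (1 - ε)`, viewed as operators on Euclidean space.
From `0 ≤ K - K̃ ≤ δ` we get `‖K - K̃‖ ≤ δ`, and `B ≥ γ` gives `γ ‖x‖ ≤ ‖B x‖`, so
`‖A x‖ ≤ ‖B x‖ + δ ‖x‖ ≤ (1 + δ / γ) ‖B x‖ ≤ c ‖B x‖` with `c = 2 / (1 - ε)`, and symmetrically.
For self-adjoint `A`, `⟪A² x, x⟫ = ‖A x‖²`, so this domination of vectors is exactly
`A² ≤ c² B²`. It also says `‖A B⁻¹‖ ≤ c`; the adjoint `B⁻¹ A` has the same norm, whence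
`‖B⁻¹ y‖ ≤ c ‖A⁻¹ y‖`, which yields the inequalities between the inverse squares.
-/

namespace ContinuousLinearMap

variable {E : Type*} [NormedAddCommGroup E] [InnerProductSpace ℝ E]

lemma inner_apply_self_le_of_le {S T : E →L[ℝ] E} (h : S ≤ T) (x : E) :
    inner ℝ (S x) x ≤ inner ℝ (T x) x := by
  have := ((le_def S T).mp h).inner_nonneg_left x
  rwa [sub_apply, inner_sub_left, sub_nonneg] at this

lemma inner_smul_one_apply_self (c : ℝ) (x : E) :
    inner ℝ ((c • (1 : E →L[ℝ] E)) x) x = c * ‖x‖ ^ 2 := by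
  rw [smul_apply, one_apply_eq_self, real_inner_smul_left, real_inner_self_eq_norm_sq]

lemma norm_le_of_nonneg_of_le_smul_one {D : E →L[ℝ] E} {δ : ℝ} (hδ : 0 ≤ δ) (hD₀ : 0 ≤ D)
    (hDδ : D ≤ δ • 1) : ‖D‖ ≤ δ := by
  rw [D.norm_eq_iSup_rayleighQuotient ((nonneg_iff_isPositive D).mp hD₀).isSymmetric]
  refine ciSup_le fun x => ?_
  have h₀ := inner_apply_self_le_of_le hD₀ x
  have hδx := inner_apply_self_le_of_le hDδ x
  rw [zero_apply, inner_zero_left] at h₀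
  rw [inner_smul_one_apply_self] at hδx
  rw [rayleighQuotient, reApplyInnerSelf_apply, RCLike.re_to_real, abs_div, abs_of_nonneg h₀,
    abs_of_nonneg (sq_nonneg _)]
  exact div_le_of_le_mul₀ (sq_nonneg _) hδ hδx

lemma mul_norm_le_norm_apply_of_smul_one_le {T : E →L[ℝ] E} {γ : ℝ} (hT : γ • 1 ≤ T) (x : E) :
    γ * ‖x‖ ≤ ‖T x‖ := by
  rcases (norm_nonneg x).eq_or_lt with hx | hx
  · rw [← hx, mul_zero]; exact norm_nonneg _
  refine le_of_mul_le_mul_right ?_ hx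
  calc γ * ‖x‖ * ‖x‖ = inner ℝ ((γ • (1 : E →L[ℝ] E)) x) x := by
        rw [inner_smul_one_apply_self]; ring
    _ ≤ inner ℝ (T x) x := inner_apply_self_le_of_le hT x
    _ ≤ ‖T x‖ * ‖x‖ := real_inner_le_norm _ _

lemma norm_apply_le_of_smul_one_le {S : E →L[ℝ] E} {γ : ℝ} (hγ : 0 < γ) (hS : γ • 1 ≤ S)
    (T : E →L[ℝ] E) (x : E) : ‖T x‖ ≤ (1 + ‖T - S‖ / γ) * ‖S x‖ := by
  have hx : ‖x‖ ≤ ‖S x‖ / γ := by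
    rw [le_div_iff₀ hγ, mul_comm]; exact mul_norm_le_norm_apply_of_smul_one_le hS x
  calc ‖T x‖ = ‖S x + (T - S) x‖ := by rw [sub_apply, add_sub_cancel]
    _ ≤ ‖S x‖ + ‖T - S‖ * ‖x‖ := norm_add_le_of_le le_rfl ((T - S).le_opNorm x)
    _ ≤ ‖S x‖ + ‖T - S‖ * (‖S x‖ / γ) := by gcongr
    _ = (1 + ‖T - S‖ / γ) * ‖S x‖ := by ring

variable [CompleteSpace E]

lemma _root_.IsSelfAdjoint.real_inner_sq_apply_self {T : E →L[ℝ] E} (hT : IsSelfAdjoint T)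
    (x : E) :
    inner ℝ ((T ^ 2) x) x = ‖T x‖ ^ 2 := by
  rw [pow_two, mul_apply_eq_comp, ← real_inner_self_eq_norm_sq]
  exact hT.isSymmetric (T x) x

lemma sq_le_smul_sq_of_norm_apply_le {T S : E →L[ℝ] E} {c : ℝ}
    (hT : IsSelfAdjoint T) (hS : IsSelfAdjoint S) (h : ∀ x, ‖T x‖ ≤ c * ‖S x‖) :
    T ^ 2 ≤ c ^ 2 • S ^ 2 := by
  rw [le_def, isPositive_iff']
  refine ⟨((IsSelfAdjoint.all _).smul (hS.pow 2)).sub (hT.pow 2), fun x => ?_⟩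
  rw [sub_apply, inner_sub_left, smul_apply, real_inner_smul_left, hT.real_inner_sq_apply_self,
    hS.real_inner_sq_apply_self, sub_nonneg, ← mul_pow]
  exact pow_le_pow_left₀ (norm_nonneg _) (h x) 2

lemma norm_apply_le_of_norm_apply_le_of_mul_eq_one {T T' S S' : E →L[ℝ] E} {c : ℝ} (hc : 0 ≤ c)
    (hT : IsSelfAdjoint T) (hS' : IsSelfAdjoint S') (hTT' : T * T' = 1) (hSS' : S * S' = 1)
    (h : ∀ x, ‖T x‖ ≤ c * ‖S x‖) (y : E) : ‖S' y‖ ≤ c * ‖T' y‖ := by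
  have hTS' : ‖T * S'‖ ≤ c := opNorm_le_bound _ hc fun z => by
    have := h (S' z)
    rwa [← mul_apply_eq_comp, ← mul_apply_eq_comp, hSS', one_apply_eq_self] at this
  have hS'T : ‖S' * T‖ ≤ c := by
    rwa [← norm_star, star_mul, hT.star_eq, hS'.star_eq] at hTS'
  calc ‖S' y‖ = ‖(S' * T) (T' y)‖ := by rw [← mul_apply_eq_comp, mul_assoc, hTT', mul_one]
    _ ≤ c * ‖T' y‖ := (S' * T).le_of_opNorm_le hS'T _

end ContinuousLinearMap

open Matrix

namespace Matrix

variable {ι : Type*} [Fintype ι] [DecidableEq ι]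

local notation "Φ" => toEuclideanCLM (𝕜 := ℝ) (n := ι)

lemma posSemidef_iff_nonneg_toEuclideanCLM {A : Matrix ι ι ℝ} : A.PosSemidef ↔ 0 ≤ Φ A := by
  rw [ContinuousLinearMap.nonneg_iff_isPositive, ← ContinuousLinearMap.isPositive_toLinearMap_iff,
    coe_toEuclideanCLM_eq_toEuclideanLin, isPositive_toEuclideanLin_iff]

lemma posSemidef_sub_iff_toEuclideanCLM_le {A B : Matrix ι ι ℝ} :
    (B - A).PosSemidef ↔ Φ A ≤ Φ B := by
  rw [ContinuousLinearMap.le_def, ← map_sub, ← ContinuousLinearMap.nonneg_iff_isPositive,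
    posSemidef_iff_nonneg_toEuclideanCLM]

lemma norm_toEuclideanCLM_le_of_posSemidef {D : Matrix ι ι ℝ} {δ : ℝ} (hδ : 0 ≤ δ)
    (hD : D.PosSemidef) (hDδ : (δ • 1 - D).PosSemidef) : ‖Φ D‖ ≤ δ := by
  rw [posSemidef_sub_iff_toEuclideanCLM_le, map_smul, map_one] at hDδ
  exact ContinuousLinearMap.norm_le_of_nonneg_of_le_smul_one hδ
    (posSemidef_iff_nonneg_toEuclideanCLM.mp hD) hDδ

lemma posSemidef_smul_sq_sub_sq_of_norm_apply_le {A B : Matrix ι ι ℝ} {c : ℝ}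
    (hA : A.IsHermitian) (hB : B.IsHermitian) (h : ∀ x, ‖Φ A x‖ ≤ c * ‖Φ B x‖) :
    (c ^ 2 • B ^ 2 - A ^ 2).PosSemidef := by
  rw [posSemidef_sub_iff_toEuclideanCLM_le, map_smul, map_pow, map_pow]
  exact ContinuousLinearMap.sq_le_smul_sq_of_norm_apply_le (hA.isSelfAdjoint.map _)
    (hB.isSelfAdjoint.map _) h

lemma norm_toEuclideanCLM_inv_apply_le {A B : Matrix ι ι ℝ} {c : ℝ} (hc : 0 ≤ c)
    (hA : A.IsHermitian) (hB : B.IsHermitian) (hAu : IsUnit A) (hBu : IsUnit B)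
    (h : ∀ x, ‖Φ A x‖ ≤ c * ‖Φ B x‖) (y : EuclideanSpace ℝ ι) : ‖Φ B⁻¹ y‖ ≤ c * ‖Φ A⁻¹ y‖ :=
  ContinuousLinearMap.norm_apply_le_of_norm_apply_le_of_mul_eq_one hc (hA.isSelfAdjoint.map _)
    (hB.inv.isSelfAdjoint.map _)
    (by rw [← map_mul, mul_nonsing_inv _ ((isUnit_iff_isUnit_det A).mp hAu), map_one])
    (by rw [← map_mul, mul_nonsing_inv _ ((isUnit_iff_isUnit_det B).mp hBu), map_one]) h y

lemma posSemidef_smul_inv_sq_sub_inv_sq_of_norm_apply_le {A B : Matrix ι ι ℝ} {c : ℝ}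
    (hc : 0 ≤ c) (hA : A.IsHermitian) (hB : B.IsHermitian) (hAu : IsUnit A) (hBu : IsUnit B)
    (h : ∀ x, ‖Φ A x‖ ≤ c * ‖Φ B x‖) : (c ^ 2 • A⁻¹ ^ 2 - B⁻¹ ^ 2).PosSemidef :=
  posSemidef_smul_sq_sub_sq_of_norm_apply_le hB.inv hA.inv
    (norm_toEuclideanCLM_inv_apply_le hc hA hB hAu hBu h)

lemma smul_one_le_toEuclideanCLM_add_smul_one {L : Matrix ι ι ℝ} (hL : L.PosSemidef) (γ : ℝ) :
    γ • 1 ≤ Φ (L + γ • 1) := by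
  rw [← map_one Φ, ← map_smul, ← posSemidef_sub_iff_toEuclideanCLM_le, add_sub_cancel_right]
  exact hL

lemma norm_toEuclideanCLM_add_smul_one_apply_le {K L : Matrix ι ι ℝ} {γ δ : ℝ}
    (hL : L.PosSemidef) (hγ : 0 < γ) (hKL : ‖Φ K - Φ L‖ ≤ δ) (x : EuclideanSpace ℝ ι) :
    ‖Φ (K + γ • 1) x‖ ≤ (1 + δ / γ) * ‖Φ (L + γ • 1) x‖ := by
  calc ‖Φ (K + γ • 1) x‖
      ≤ (1 + ‖Φ (K + γ • 1) - Φ (L + γ • 1)‖ / γ) * ‖Φ (L + γ • 1) x‖ :=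
        ContinuousLinearMap.norm_apply_le_of_smul_one_le hγ
          (smul_one_le_toEuclideanCLM_add_smul_one hL γ) _ x
    _ ≤ (1 + δ / γ) * ‖Φ (L + γ • 1) x‖ := by
        rw [map_add, map_add, add_sub_add_right_eq_sub]; gcongr

end Matrix

/-- Squared Loewner inequalities for regularized approximations. -/
theorem squared_loewner_approx {n : ℕ} (K Kt : Matrix (Fin n) (Fin n) ℝ)
    (hK : K.PosSemidef) (hKt : Kt.PosSemidef)
    (γ ε : ℝ) (hγ : 0 < γ) (hε0 : 0 ≤ ε) (hε1 : ε < 1)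
    (h1 : (K - Kt).PosSemidef)
    (h2 : ((γ / (1 - ε)) • (1 : Matrix (Fin n) (Fin n) ℝ) - (K - Kt)).PosSemidef) :
    ((2 / (1 - ε)) ^ 2 • (Kt + γ • 1) ^ 2 - (K + γ • 1) ^ 2).PosSemidef ∧
    ((2 / (1 - ε)) ^ 2 • (K + γ • 1) ^ 2 - (Kt + γ • 1) ^ 2).PosSemidef ∧
    (((K + γ • 1)⁻¹) ^ 2 - ((1 - ε) ^ 2 / 4) • ((Kt + γ • 1)⁻¹) ^ 2).PosSemidef ∧
    ((4 / (1 - ε) ^ 2) • ((Kt + γ • 1)⁻¹) ^ 2 - ((K + γ • 1)⁻¹) ^ 2).PosSemidef := by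
  have hε : 0 < 1 - ε := by linarith
  set Φ := toEuclideanCLM (𝕜 := ℝ) (n := Fin n)
  set c := 2 / (1 - ε)
  have hc : 0 < c := by positivity
  have hδc : 1 + γ / (1 - ε) / γ ≤ c := by
    rw [show γ / (1 - ε) / γ = 1 / (1 - ε) by field_simp, one_add_div hε.ne',
      div_le_div_iff_of_pos_right hε]
    linarith
  have hD : ‖Φ K - Φ Kt‖ ≤ γ / (1 - ε) := by
    simpa only [map_sub] using norm_toEuclideanCLM_le_of_posSemidef (by positivity) h1 h2
  have hAB (x) : ‖Φ (K + γ • 1) x‖ ≤ c * ‖Φ (Kt + γ • 1) x‖ :=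
    (norm_toEuclideanCLM_add_smul_one_apply_le hKt hγ hD x).trans (by gcongr)
  have hBA (x) : ‖Φ (Kt + γ • 1) x‖ ≤ c * ‖Φ (K + γ • 1) x‖ :=
    (norm_toEuclideanCLM_add_smul_one_apply_le hK hγ (norm_sub_rev (Φ K) _ ▸ hD) x).trans
      (by gcongr)
  have hA : (K + γ • 1).PosDef := PosDef.posSemidef_add hK (PosDef.one.smul hγ)
  have hB : (Kt + γ • 1).PosDef := PosDef.posSemidef_add hKt (PosDef.one.smul hγ)
  refine ⟨posSemidef_smul_sq_sub_sq_of_norm_apply_le hA.isHermitian hB.isHermitian hAB,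
    posSemidef_smul_sq_sub_sq_of_norm_apply_le hB.isHermitian hA.isHermitian hBA, ?_, ?_⟩
  · have h := (posSemidef_smul_inv_sq_sub_inv_sq_of_norm_apply_le hc.le hA.isHermitian
      hB.isHermitian hA.isUnit hB.isUnit hAB).smul (inv_nonneg.mpr (sq_nonneg c))
    rwa [smul_sub, smul_smul, inv_mul_cancel₀ (by positivity), one_smul,
      show (c ^ 2)⁻¹ = (1 - ε) ^ 2 / 4 by simp only [c]; field_simp; norm_num] at h
  · rw [show 4 / (1 - ε) ^ 2 = c ^ 2 by simp only [c]; field_simp; norm_num]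
    exact posSemidef_smul_inv_sq_sub_inv_sq_of_norm_apply_le hc.le hB.isHermitian
      hA.isHermitian hB.isUnit hA.isUnit hBA
end

section
/- Scalar inequality underlying the effective-dimension estimator: for σ² ≥ 0, γ > 0, 0 ≤ ε < 1, and η = (2-ε)/(1-ε), it holds that 1 - σ²/(σ² + ηγ) - ((1-ε)⁴/16)·γσ²/(σ² + γ)² ≤ η(1 + σ²/γ)·γ²/(σ² + γ)². -/
/-- Scalar inequality underlying the effective-dimension estimator. -/
theorem deff_estimator_scalar_bound (s γ ε : ℝ) (hs : 0 ≤ s) (hγ : 0 < γ)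
    (hε0 : 0 ≤ ε) (hε1 : ε < 1) :
    let η : ℝ := (2 - ε) / (1 - ε)
    1 - s / (s + η * γ) - ((1 - ε) ^ 4 / 16) * (γ * s / (s + γ) ^ 2) ≤
      η * (1 + s / γ) * (γ ^ 2 / (s + γ) ^ 2) := by
  intro η
  have h1ε : (0:ℝ) < 1 - ε := by linarith
  have hη1 : 1 ≤ η := by
    rw [le_div_iff₀ h1ε]; linarith
  have hηpos : 0 < η := by linarith
  have hsγ : 0 < s + γ := by linarith
  have hsηγ : 0 < s + η * γ := by nlinarith
  have hsub : 0 ≤ ((1 - ε) ^ 4 / 16) * (γ * s / (s + γ) ^ 2) := by positivity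
  have h1 : 1 - s / (s + η * γ) = η * γ / (s + η * γ) := by
    field_simp; ring
  have h2 : η * (1 + s / γ) * (γ ^ 2 / (s + γ) ^ 2) = η * γ / (s + γ) := by
    field_simp; ring
  have h3 : η * γ / (s + η * γ) ≤ η * γ / (s + γ) := by
    apply div_le_div_of_nonneg_left (by positivity) hsγ
    nlinarith
  linarith [h1, h2, h3, hsub]
end
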